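/- arXiv:2511.06718 — 3 statements merged into one kernel-verified Lean document; each statement's English description precedes it below -/
import Mathlib

section
/- Let $A, B$ be positive semidefinite matrices (or positive self-adjoint trace-class operators on a Hilbert space) and $k$ a positive integer. Then $\mathrm{Tr}((AB)^k) \le \|B\|^k \, \mathrm{Tr}(A)^k$, where $\|B\|$ is the operator norm. -/
open Matrix Finset

private lemma aux_trace_cyclic_pow {n : ℕ} (X Y : Matrix (Fin n) (Fin n) ℝ) (k : ℕ) :
    Matrix.trace ((X * Y) ^ k) = Matrix.trace ((Y * X) ^ k) := by
  induction k with
  | zero => simp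
  | succ m ih =>
    have hsemi : Y * (X * Y) ^ m = (Y * X) ^ m * Y := by
      clear ih
      induction m with
      | zero => simp
      | succ l ihl =>
        rw [pow_succ, ← mul_assoc, ihl, pow_succ]
        simp only [mul_assoc]
    calc Matrix.trace ((X * Y) ^ (m + 1))
        = Matrix.trace ((X * Y) ^ m * X * Y) := by rw [pow_succ, mul_assoc]
      _ = Matrix.trace (Y * ((X * Y) ^ m * X)) := by rw [Matrix.trace_mul_comm]
      _ = Matrix.trace ((Y * X) ^ m * (Y * X)) := by
          rw [← mul_assoc, hsemi, mul_assoc]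
      _ = Matrix.trace ((Y * X) ^ (m + 1)) := by rw [pow_succ]

private lemma aux_conj_pow {n : ℕ} (U D : Matrix (Fin n) (Fin n) ℝ)
    (h1 : star U * U = 1) (h2 : U * star U = 1) (k : ℕ) :
    (U * D * star U) ^ k = U * D ^ k * star U := by
  induction k with
  | zero => simpa using h2.symm
  | succ m ih =>
    rw [pow_succ, ih, pow_succ]
    calc U * D ^ m * star U * (U * D * star U)
        = U * D ^ m * (star U * U) * D * star U := by
          simp only [mul_assoc]
      _ = U * (D ^ m * D) * star U := by rw [h1]; simp only [mul_one, mul_assoc]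

private lemma aux_sum_pow {m : ℕ} (f : Fin m → ℝ) (hf : ∀ i, 0 ≤ f i) (k : ℕ) (hk : 0 < k) :
    ∑ i, f i ^ k ≤ (∑ i, f i) ^ k := by
  obtain ⟨l, rfl⟩ : ∃ l, k = l + 1 := ⟨k - 1, (Nat.succ_pred_eq_of_pos hk).symm⟩
  have hs : ∀ i : Fin m, f i ≤ ∑ j, f j := fun i =>
    Finset.single_le_sum (fun j _ => hf j) (Finset.mem_univ i)
  calc ∑ i, f i ^ (l + 1) = ∑ i, f i * f i ^ l := by
        simp [pow_succ, mul_comm]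
    _ ≤ ∑ i, f i * (∑ j, f j) ^ l := by
        refine Finset.sum_le_sum fun i _ => ?_
        exact mul_le_mul_of_nonneg_left (pow_le_pow_left₀ (hf i) (hs i) l) (hf i)
    _ = (∑ j, f j) * (∑ j, f j) ^ l := by rw [← Finset.sum_mul]
    _ = (∑ j, f j) ^ (l + 1) := by rw [pow_succ, mul_comm]

/-- trace inequality Tr((AB)^k) ≤ ‖B‖^k (Tr A)^k for positive semidefinite
matrices, with ‖B‖ the operator (spectral) norm. -/
theorem stmt_7 {n : ℕ} (A B : Matrix (Fin n) (Fin n) ℝ)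
    (hA : A.PosSemidef) (hB : B.PosSemidef) (k : ℕ) (hk : 0 < k) :
    Matrix.trace ((A * B) ^ k) ≤
      ‖LinearMap.toContinuousLinearMap (Matrix.toEuclideanLin B)‖ ^ k
        * (Matrix.trace A) ^ k := by
  set N : ℝ := ‖LinearMap.toContinuousLinearMap (Matrix.toEuclideanLin B)‖ with hN
  have hN0 : 0 ≤ N := norm_nonneg _
  obtain ⟨S, hSps, hSS⟩ : ∃ S : Matrix (Fin n) (Fin n) ℝ, S.PosSemidef ∧ S * S = A := by
    open scoped MatrixOrder in
    exact ⟨CFC.sqrt A, (CFC.sqrt_nonneg A).posSemidef, CFC.sqrt_mul_sqrt_self A hA.nonneg⟩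
  have hSsym : ∀ i j, S i j = S j i := by
    intro i j
    have := hSps.1
    have h := congrFun (congrFun this j) i
    simpa [Matrix.conjTranspose_apply] using h
  set C : Matrix (Fin n) (Fin n) ℝ := S * B * S with hCdef
  have hC : C.PosSemidef := by
    have h := hB.mul_mul_conjTranspose_same S
    rwa [hSps.1.eq] at h
  -- quadratic form bound
  have hquad : ∀ v : Fin n → ℝ, dotProduct v (B *ᵥ v) ≤ N * ∑ j, v j ^ 2 := by
    intro v
    set x : EuclideanSpace ℝ (Fin n) := (WithLp.equiv 2 (Fin n → ℝ)).symm v with hx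
    have hTx : (LinearMap.toContinuousLinearMap (Matrix.toEuclideanLin B)) x
        = (WithLp.equiv 2 (Fin n → ℝ)).symm (B *ᵥ v) := by
      simp [hx, Matrix.toEuclideanLin_apply_piLp_toLp]
    have hinner : dotProduct v (B *ᵥ v)
        = inner ℝ x ((LinearMap.toContinuousLinearMap (Matrix.toEuclideanLin B)) x) := by
      rw [hTx]
      simp [PiLp.inner_apply, hx, dotProduct, mul_comm]
    have hxsq : ∑ j, v j ^ 2 = ‖x‖ ^ 2 := by
      rw [← real_inner_self_eq_norm_sq]
      simp only [PiLp.inner_apply, hx, WithLp.equiv_symm_apply, pow_two, RCLike.inner_apply,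
        conj_trivial]
    rw [hinner, hxsq]
    calc inner ℝ x ((LinearMap.toContinuousLinearMap (Matrix.toEuclideanLin B)) x)
        ≤ ‖x‖ * ‖(LinearMap.toContinuousLinearMap (Matrix.toEuclideanLin B)) x‖ :=
          real_inner_le_norm _ _
      _ ≤ ‖x‖ * (N * ‖x‖) := by
          refine mul_le_mul_of_nonneg_left ?_ (norm_nonneg x)
          exact ContinuousLinearMap.le_opNorm _ x
      _ = N * ‖x‖ ^ 2 := by ring
  -- trace C ≤ N * trace A
  have htrC : Matrix.trace C ≤ N * Matrix.trace A := by
    have hdiag : ∀ i, C i i = dotProduct (fun j => S j i) (B *ᵥ fun j => S j i) := by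
      intro i
      simp only [hCdef, Matrix.mul_apply, dotProduct, Matrix.mulVec, dotProduct,
        Finset.sum_mul, Finset.mul_sum]
      rw [Finset.sum_comm]
      refine Finset.sum_congr rfl fun j _ => Finset.sum_congr rfl fun l _ => ?_
      rw [hSsym i j]
      ring
    have htrA : Matrix.trace A = ∑ i, ∑ j, S j i ^ 2 := by
      rw [← hSS]
      simp only [Matrix.trace, Matrix.diag, Matrix.mul_apply]
      refine Finset.sum_congr rfl fun i _ => Finset.sum_congr rfl fun j _ => ?_
      rw [hSsym i j]; ring
    calc Matrix.trace C = ∑ i, C i i := rfl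
      _ ≤ ∑ i, N * ∑ j, S j i ^ 2 := by
          refine Finset.sum_le_sum fun i _ => ?_
          rw [hdiag i]; exact hquad _
      _ = N * Matrix.trace A := by rw [← Finset.mul_sum, htrA]
  -- spectral decomposition of C
  have hH := hC.1
  set U : Matrix (Fin n) (Fin n) ℝ := (Matrix.IsHermitian.eigenvectorUnitary hH : Matrix (Fin n) (Fin n) ℝ) with hU
  have hU1 : star U * U = 1 :=
    Matrix.mem_unitaryGroup_iff'.mp (Matrix.IsHermitian.eigenvectorUnitary hH).2
  have hU2 : U * star U = 1 :=
    Matrix.mem_unitaryGroup_iff.mp (Matrix.IsHermitian.eigenvectorUnitary hH).2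
  set f : Fin n → ℝ := hH.eigenvalues with hf
  have hfnon : ∀ i, 0 ≤ f i := fun i => hC.eigenvalues_nonneg i
  have hspec : C = U * Matrix.diagonal f * star U := by
    have := hH.spectral_theorem
    simpa [hU, hf] using this
  have htrpow : ∀ m : ℕ, Matrix.trace (C ^ m) = ∑ i, f i ^ m := by
    intro m
    rw [hspec, aux_conj_pow U _ hU1 hU2, Matrix.trace_mul_comm, ← mul_assoc, hU1, one_mul,
      Matrix.diagonal_pow, Matrix.trace_diagonal]
    simp [Pi.pow_apply]
  have htrC1 : Matrix.trace C = ∑ i, f i := by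
    have := htrpow 1
    simpa using this
  have htrC0 : 0 ≤ Matrix.trace C := by
    rw [htrC1]; exact Finset.sum_nonneg fun i _ => hfnon i
  -- main chain
  calc Matrix.trace ((A * B) ^ k)
      = Matrix.trace ((S * (S * B)) ^ k) := by rw [← hSS, mul_assoc]
    _ = Matrix.trace ((S * B * S) ^ k) := by
        rw [aux_trace_cyclic_pow, mul_assoc]
    _ = ∑ i, f i ^ k := htrpow k
    _ ≤ (∑ i, f i) ^ k := aux_sum_pow f hfnon k hk
    _ = (Matrix.trace C) ^ k := by rw [htrC1]
    _ ≤ (N * Matrix.trace A) ^ k := pow_le_pow_left₀ htrC0 htrC k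
    _ = N ^ k * (Matrix.trace A) ^ k := mul_pow _ _ _
end

section
/- Let $A, B$ be positive self-adjoint operators on a Hilbert space with $\|A\| \le 1$ and $\|B\| \le 1$, and let $u > 1$. Then $\|A^u - B^u\| \le 2u \, \|A - B\|$. -/
set_option synthInstance.maxHeartbeats 1000000
set_option maxHeartbeats 2000000

open MeasureTheory Set Real

namespace Stmt8Aux

/-! ### Scalar integral facts -/

noncomputable def I0 (s : ℝ) : ℝ := ∫ t in Ioi (0:ℝ), t ^ (s-1) / (1+t)

lemma contOn_I0fn {s : ℝ} : ContinuousOn (fun t : ℝ => t ^ (s-1) / (1+t)) (Ioi (0:ℝ)) := by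
  apply ContinuousOn.div
  · exact ContinuousOn.rpow_const continuousOn_id (fun x hx => Or.inl (ne_of_gt hx))
  · fun_prop
  · intro x hx
    have : (0:ℝ) < x := hx
    positivity

lemma integrableOn_I0fn {s : ℝ} (hs0 : 0 < s) (hs1 : s < 1) :
    IntegrableOn (fun t : ℝ => t ^ (s-1) / (1+t)) (Ioi (0:ℝ)) := by
  have hsplit : Ioi (0:ℝ) = Ioc 0 1 ∪ Ioi 1 := (Ioc_union_Ioi_eq_Ioi zero_le_one).symm
  rw [hsplit]
  refine IntegrableOn.union ?_ ?_
  · have base : IntegrableOn (fun t : ℝ => t ^ (s-1)) (Ioc (0:ℝ) 1) := by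
      rw [integrableOn_Ioc_iff_integrableOn_Ioo]
      exact (intervalIntegral.integrableOn_Ioo_rpow_iff zero_lt_one).mpr (by linarith)
    refine base.mono' ((contOn_I0fn.mono ?_).aestronglyMeasurable measurableSet_Ioc) ?_
    · exact fun x hx => hx.1
    · filter_upwards [ae_restrict_mem measurableSet_Ioc] with t ht
      have ht0 : (0:ℝ) < t := ht.1
      rw [Real.norm_eq_abs, abs_of_nonneg (by positivity)]
      rw [div_le_iff₀ (by positivity)]
      nlinarith [Real.rpow_nonneg ht0.le (s-1)]
  · have base : IntegrableOn (fun t : ℝ => t ^ (s-2)) (Ioi (1:ℝ)) :=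
      integrableOn_Ioi_rpow_of_lt (by linarith) zero_lt_one
    refine base.mono' ((contOn_I0fn.mono (show Ioi (1:ℝ) ⊆ Ioi 0 from fun x (hx : (1:ℝ) < x) => show (0:ℝ) < x from lt_trans zero_lt_one hx)).aestronglyMeasurable
      measurableSet_Ioi) ?_
    filter_upwards [ae_restrict_mem measurableSet_Ioi] with t ht
    have ht0 : (0:ℝ) < t := lt_trans zero_lt_one ht
    rw [Real.norm_eq_abs, abs_of_nonneg (by positivity)]
    have h1 : t ^ (s-2) = t ^ (s-1) / t := by
      rw [show s - 2 = (s-1) - 1 by ring, Real.rpow_sub ht0, Real.rpow_one]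
    rw [h1]
    apply div_le_div_of_nonneg_left (by positivity) ht0
    linarith

lemma I0_pos {s : ℝ} (hs0 : 0 < s) (hs1 : s < 1) : 0 < I0 s := by
  rw [I0]
  rw [setIntegral_pos_iff_support_of_nonneg_ae ?_ (integrableOn_I0fn hs0 hs1)]
  · have hsub : Ioi (0:ℝ) ⊆ Function.support (fun t : ℝ => t ^ (s-1) / (1+t)) := by
      intro x hx
      have hx0 : (0:ℝ) < x := hx
      have : 0 < x ^ (s-1) / (1+x) := by positivity
      exact ne_of_gt this
    rw [inter_eq_right.mpr hsub]
    simp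
  · filter_upwards [ae_restrict_mem measurableSet_Ioi] with t ht
    have : (0:ℝ) < t := ht
    positivity

lemma scalar_rep {s : ℝ} (hs0 : 0 < s) (hs1 : s < 1) {x : ℝ} (hx : x ∈ Icc (0:ℝ) 1) :
    ∫ lam in Ioi (0:ℝ), lam ^ (s-1) * (x^2 * (x + lam)⁻¹) = I0 s * x ^ (1+s) := by
  rcases eq_or_lt_of_le hx.1 with h0 | hxpos
  · rw [← h0]
    simp [Real.zero_rpow (by linarith : 1 + s ≠ 0)]
  · have key := integral_comp_mul_left_Ioi
      (fun lam : ℝ => lam ^ (s-1) * (x^2 * (x + lam)⁻¹)) 0 hxpos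
    rw [mul_zero] at key
    have hinner : ∫ t in Ioi (0:ℝ), (x*t) ^ (s-1) * (x^2 * (x + x*t)⁻¹)
        = x ^ s * I0 s := by
      rw [I0, ← integral_const_mul]
      refine setIntegral_congr_fun measurableSet_Ioi (fun t ht => ?_)
      have ht0 : (0:ℝ) < t := ht
      have hxt : x + x*t = x * (1+t) := by ring
      rw [Real.mul_rpow hxpos.le ht0.le, hxt, mul_inv]
      have h2 : x^2 * x⁻¹ = x := by
        rw [pow_two, mul_assoc, mul_inv_cancel₀ hxpos.ne', mul_one]
      have h3 : x^(s-1) * x = x^s := by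
        rw [← Real.rpow_add_one hxpos.ne' (s-1)]
        norm_num
      calc x ^ (s-1) * t ^ (s-1) * (x^2 * (x⁻¹ * (1+t)⁻¹))
          = (x^(s-1) * (x^2 * x⁻¹)) * (t^(s-1) * (1+t)⁻¹) := by ring
        _ = x ^ s * (t ^ (s-1) / (1+t)) := by rw [h2, h3, div_eq_mul_inv]
    rw [hinner, smul_eq_mul] at key
    have hx1s : x * x ^ s = x ^ (1+s) := by
      rw [Real.rpow_add hxpos, Real.rpow_one]
    field_simp at key
    have goalrw : ∫ lam in Ioi (0:ℝ), lam ^ (s-1) * (x^2 * (x + lam)⁻¹)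
        = ∫ lam in Ioi (0:ℝ), x^2 * lam ^ (s-1) / (x + lam) := by
      refine setIntegral_congr_fun measurableSet_Ioi (fun t ht => ?_)
      ring
    rw [goalrw, ← key, ← hx1s]
    ring

lemma integrableOn_bnd {s : ℝ} (hs0 : 0 < s) (hs1 : s < 1) :
    IntegrableOn (fun t : ℝ => t ^ (s-1) * min 1 t⁻¹) (Ioi (0:ℝ)) := by
  have hsplit : Ioi (0:ℝ) = Ioc 0 1 ∪ Ioi 1 := (Ioc_union_Ioi_eq_Ioi zero_le_one).symm
  have hcont : ContinuousOn (fun t : ℝ => t ^ (s-1) * min 1 t⁻¹) (Ioi (0:ℝ)) := by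
    apply ContinuousOn.mul
    · exact ContinuousOn.rpow_const continuousOn_id (fun x hx => Or.inl (ne_of_gt hx))
    · exact fun x hx => Filter.Tendsto.min continuousWithinAt_const
        ((ContinuousOn.inv₀ continuousOn_id (fun y hy => ne_of_gt hy)) x hx)
  rw [hsplit]
  refine IntegrableOn.union ?_ ?_
  · have base : IntegrableOn (fun t : ℝ => t ^ (s-1)) (Ioc (0:ℝ) 1) := by
      rw [integrableOn_Ioc_iff_integrableOn_Ioo]
      exact (intervalIntegral.integrableOn_Ioo_rpow_iff zero_lt_one).mpr (by linarith)
    refine base.mono' ((hcont.mono (fun x hx => hx.1)).aestronglyMeasurable measurableSet_Ioc) ?_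
    filter_upwards [ae_restrict_mem measurableSet_Ioc] with t ht
    have ht0 : (0:ℝ) < t := ht.1
    have hmin : min 1 t⁻¹ ≤ 1 := min_le_left _ _
    have hmin0 : 0 ≤ min 1 t⁻¹ := le_min zero_le_one (by positivity)
    rw [Real.norm_eq_abs, abs_of_nonneg (by positivity)]
    calc t ^ (s-1) * min 1 t⁻¹ ≤ t ^ (s-1) * 1 :=
          mul_le_mul_of_nonneg_left hmin (by positivity)
      _ = t ^ (s-1) := mul_one _
  · have base : IntegrableOn (fun t : ℝ => t ^ (s-2)) (Ioi (1:ℝ)) :=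
      integrableOn_Ioi_rpow_of_lt (by linarith) zero_lt_one
    refine base.mono' ((hcont.mono (show Ioi (1:ℝ) ⊆ Ioi 0 from fun x (hx : (1:ℝ) < x) => show (0:ℝ) < x from lt_trans zero_lt_one hx)).aestronglyMeasurable
      measurableSet_Ioi) ?_
    filter_upwards [ae_restrict_mem measurableSet_Ioi] with t ht
    have ht0 : (0:ℝ) < t := lt_trans zero_lt_one ht
    have hmin0 : 0 ≤ min 1 t⁻¹ := le_min zero_le_one (by positivity)
    rw [Real.norm_eq_abs, abs_of_nonneg (by positivity)]
    have h1 : t ^ (s-2) = t ^ (s-1) * t⁻¹ := by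
      rw [show s - 2 = (s-1) - 1 by ring, Real.rpow_sub ht0, Real.rpow_one, div_eq_mul_inv]
    rw [h1]
    exact mul_le_mul_of_nonneg_left (min_le_right _ _) (by positivity)

/-! ### Operator facts -/

variable {H : Type*} [NormedAddCommGroup H] [InnerProductSpace ℂ H] [CompleteSpace H] [Nontrivial H]

section opfacts

variable (A : H →L[ℂ] H) (hA : IsSelfAdjoint A) (hsA : spectrum ℝ A ⊆ Icc 0 1)
variable {lam : ℝ} (hlam : 0 < lam)

include hsA hlam in
lemma cont_inv : ContinuousOn (fun x : ℝ => (x+lam)⁻¹) (spectrum ℝ A) := by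
  apply ContinuousOn.inv₀ (by fun_prop)
  intro x hx
  have := (hsA hx).1
  positivity

include hsA hlam in
lemma hne_spec : ∀ x ∈ spectrum ℝ A, x + lam ≠ 0 := by
  intro x hx
  have := (hsA hx).1
  positivity

include hA hsA hlam in
lemma resolvent_eq : (A + lam • 1) * cfc (fun x : ℝ => (x+lam)⁻¹) A = 1 ∧
    cfc (fun x : ℝ => (x+lam)⁻¹) A * (A + lam • 1) = 1 := by
  have hne := hne_spec A hsA hlam
  have hsum : A + lam • 1 = cfc (fun x : ℝ => x + lam) A := by
    rw [cfc_add (a := A) (fun x : ℝ => x) (fun _ => lam) (by fun_prop) (by fun_prop),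
      cfc_id' ℝ A, cfc_const lam A hA, Algebra.algebraMap_eq_smul_one]
  constructor
  · rw [hsum, ← cfc_mul _ _ A (by fun_prop) (cont_inv A hsA hlam)]
    rw [cfc_congr (g := fun _ : ℝ => (1:ℝ)) (fun x hx => mul_inv_cancel₀ (hne x hx))]
    exact cfc_one ℝ A
  · rw [hsum, ← cfc_mul _ _ A (cont_inv A hsA hlam) (by fun_prop)]
    rw [cfc_congr (g := fun _ : ℝ => (1:ℝ)) (fun x hx => inv_mul_cancel₀ (hne x hx))]
    exact cfc_one ℝ A

include hA hsA hlam in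
lemma gfun_eq : cfc (fun x : ℝ => x^2 * (x+lam)⁻¹) A
    = A - lam • 1 + lam^2 • cfc (fun x : ℝ => (x+lam)⁻¹) A := by
  have hne := hne_spec A hsA hlam
  have h1 : cfc (fun x : ℝ => x^2 * (x+lam)⁻¹) A
      = cfc (fun x : ℝ => (x - lam) + lam^2 * (x+lam)⁻¹) A := by
    apply cfc_congr
    intro x hx
    have hx0 := hne x hx
    field_simp
    ring
  have hc2 : ContinuousOn (fun x : ℝ => lam^2 * (x+lam)⁻¹) (spectrum ℝ A) :=
    ContinuousOn.mul continuousOn_const (cont_inv A hsA hlam)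
  rw [h1, cfc_add (a := A) _ _ (by fun_prop) hc2,
    cfc_sub (fun x : ℝ => x) (fun _ => lam) A (by fun_prop) (by fun_prop), cfc_id' ℝ A,
    cfc_const lam A hA, Algebra.algebraMap_eq_smul_one,
    cfc_const_mul _ _ A (cont_inv A hsA hlam)]

include hA hsA hlam in
lemma pfun_eq : cfc (fun x : ℝ => x * (x+lam)⁻¹) A
    = 1 - lam • cfc (fun x : ℝ => (x+lam)⁻¹) A := by
  have hne := hne_spec A hsA hlam
  have h1 : cfc (fun x : ℝ => x * (x+lam)⁻¹) A
      = cfc (fun x : ℝ => 1 - lam * (x+lam)⁻¹) A := by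
    apply cfc_congr
    intro x hx
    have hx0 := hne x hx
    field_simp
    ring
  have hc2 : ContinuousOn (fun x : ℝ => lam * (x+lam)⁻¹) (spectrum ℝ A) :=
    ContinuousOn.mul continuousOn_const (cont_inv A hsA hlam)
  have hone : cfc (fun _ : ℝ => (1:ℝ)) A = 1 := by rw [cfc_const 1 A hA, map_one]
  rw [h1, cfc_sub (fun _ : ℝ => (1:ℝ)) _ A (by fun_prop) hc2, hone,
    cfc_const_mul _ _ A (cont_inv A hsA hlam)]

include hA hsA hlam in
lemma qfun_eq : cfc (fun x : ℝ => lam * (x+lam)⁻¹) A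
    = lam • cfc (fun x : ℝ => (x+lam)⁻¹) A :=
  cfc_const_mul _ _ A (cont_inv A hsA hlam)

include hA hsA hlam in
lemma pfun_norm : ‖cfc (fun x : ℝ => x * (x+lam)⁻¹) A‖ ≤ (1+lam)⁻¹ := by
  apply norm_cfc_le (by positivity)
  intro x hx
  obtain ⟨hx0, hx1⟩ := hsA hx
  rw [Real.norm_eq_abs, ← div_eq_mul_inv, abs_of_nonneg (by positivity), ← one_div,
    div_le_div_iff₀ (by positivity) (by positivity)]
  nlinarith

include hA hsA hlam in
lemma qfun_norm : ‖cfc (fun x : ℝ => lam * (x+lam)⁻¹) A‖ ≤ 1 := by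
  apply norm_cfc_le zero_le_one
  intro x hx
  obtain ⟨hx0, hx1⟩ := hsA hx
  rw [Real.norm_eq_abs, ← div_eq_mul_inv, abs_of_nonneg (by positivity),
    div_le_one (by positivity)]
  linarith

end opfacts

section dbound

variable {A B : H →L[ℂ] H} (hA : IsSelfAdjoint A) (hB : IsSelfAdjoint B)
  (hsA : spectrum ℝ A ⊆ Icc 0 1) (hsB : spectrum ℝ B ⊆ Icc 0 1)
  {lam : ℝ} (hlam : 0 < lam)

include hA hB hsA hsB hlam in
lemma Dlam_eq :
    cfc (fun x : ℝ => x^2 * (x+lam)⁻¹) A - cfc (fun x : ℝ => x^2 * (x+lam)⁻¹) B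
    = cfc (fun x : ℝ => x * (x+lam)⁻¹) A * (A - B) * cfc (fun x : ℝ => lam * (x+lam)⁻¹) B
      + (A - B) * cfc (fun x : ℝ => x * (x+lam)⁻¹) B := by
  set RA := cfc (fun x : ℝ => (x+lam)⁻¹) A with hRA
  set RB := cfc (fun x : ℝ => (x+lam)⁻¹) B with hRB
  obtain ⟨hAl, hAr⟩ := resolvent_eq A hA hsA hlam
  obtain ⟨hBl, hBr⟩ := resolvent_eq B hB hsB hlam
  have hres : RA - RB = RA * (B - A) * RB := by
    calc RA - RB = RA * ((B + lam • 1) * RB) - (RA * (A + lam • 1)) * RB := by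
          rw [hBl, hAr]; simp
      _ = RA * (B - A) * RB := by noncomm_ring
  rw [gfun_eq A hA hsA hlam, gfun_eq B hB hsB hlam,
    pfun_eq A hA hsA hlam, pfun_eq B hB hsB hlam, qfun_eq B hB hsB hlam]
  have expand : (1 - lam • RA) * (A - B) * (lam • RB) + (A - B) * (1 - lam • RB)
      = (A - B) - (lam^2) • (RA * (A - B) * RB) := by
    simp only [sub_mul, mul_sub, smul_mul_assoc, mul_smul_comm, one_mul, mul_one]
    module
  rw [expand]
  have hcollect : A - lam • 1 + lam ^ 2 • RA - (B - lam • 1 + lam ^ 2 • RB)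
      = (A - B) + lam^2 • (RA - RB) := by
    module
  rw [hcollect, hres]
  have hneg : RA * (B - A) * RB = -(RA * (A - B) * RB) := by noncomm_ring
  rw [hneg]
  module

include hA hB hsA hsB hlam in
lemma Dlam_norm :
    ‖cfc (fun x : ℝ => x^2 * (x+lam)⁻¹) A - cfc (fun x : ℝ => x^2 * (x+lam)⁻¹) B‖
      ≤ 2 * (1+lam)⁻¹ * ‖A - B‖ := by
  rw [Dlam_eq hA hB hsA hsB hlam]
  have hPn := pfun_norm A hA hsA hlam
  have hSn := pfun_norm B hB hsB hlam
  have hQn := qfun_norm B hB hsB hlam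
  have h1 : ‖cfc (fun x : ℝ => x * (x+lam)⁻¹) A * (A - B) * cfc (fun x : ℝ => lam * (x+lam)⁻¹) B‖
      ≤ ((1+lam)⁻¹ * ‖A - B‖) * 1 := by
    refine (norm_mul_le _ _).trans ?_
    refine mul_le_mul ?_ hQn (norm_nonneg _) (by positivity)
    refine (norm_mul_le _ _).trans ?_
    exact mul_le_mul hPn le_rfl (norm_nonneg _) (by positivity)
  have h2 : ‖(A - B) * cfc (fun x : ℝ => x * (x+lam)⁻¹) B‖ ≤ ‖A - B‖ * (1+lam)⁻¹ :=
    (norm_mul_le _ _).trans (mul_le_mul le_rfl hSn (norm_nonneg _) (norm_nonneg _))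
  refine (norm_add_le _ _).trans ?_
  calc _ ≤ ((1+lam)⁻¹ * ‖A - B‖) * 1 + ‖A - B‖ * (1+lam)⁻¹ := add_le_add h1 h2
    _ = 2 * (1+lam)⁻¹ * ‖A - B‖ := by ring

end dbound

/-! ### Integral representation -/

lemma cfc_rep {s : ℝ} (hs0 : 0 < s) (hs1 : s < 1) (A : H →L[ℂ] H) (hA : IsSelfAdjoint A)
    (hsA : spectrum ℝ A ⊆ Icc 0 1) :
    Integrable (fun lam : ℝ => lam ^ (s-1) • cfc (fun x : ℝ => x^2 * (x+lam)⁻¹) A)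
      (volume.restrict (Ioi 0)) ∧
    (I0 s) • cfc (fun x : ℝ => x ^ (1+s)) A
      = ∫ lam in Ioi (0:ℝ), lam ^ (s-1) • cfc (fun x : ℝ => x^2 * (x+lam)⁻¹) A := by
  set Φ : C(spectrum ℝ A, ℝ) →L[ℝ] (H →L[ℂ] H) :=
    ⟨(cfcHom hA (R := ℝ)).toAlgHom.toLinearMap, (cfcHom_isClosedEmbedding hA).continuous⟩ with hΦ
  have hΦ_apply : ∀ φ, Φ φ = cfcHom hA (R := ℝ) φ := fun φ => rfl
  set g : ℝ → ℝ → ℝ := fun lam x => lam ^ (s-1) * (x^2 * (x+lam)⁻¹) with hg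
  have hgcont : ∀ lam : ℝ, 0 < lam → ContinuousOn (g lam) (spectrum ℝ A) := by
    intro lam hlam
    apply ContinuousOn.mul continuousOn_const
    apply ContinuousOn.mul (by fun_prop)
    apply ContinuousOn.inv₀ (by fun_prop)
    intro x hx
    have := (hsA hx).1
    positivity
  set F : ℝ → C(spectrum ℝ A, ℝ) := fun lam =>
    if hlam : 0 < lam then ⟨(spectrum ℝ A).domRestrict (g lam), (hgcont lam hlam).restrict⟩
    else 0 with hF
  have hFpos : ∀ (lam : ℝ) (h : 0 < lam),
      F lam = ⟨(spectrum ℝ A).domRestrict (g lam), (hgcont lam h).restrict⟩ := by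
    intro lam h
    simp only [hF]
    rw [dif_pos h]
  set fK : C(spectrum ℝ A, ℝ) := ⟨(spectrum ℝ A).domRestrict (fun x : ℝ => x ^ (1+s)),
    (ContinuousOn.rpow_const continuousOn_id (fun x _ => Or.inr (by linarith))).restrict⟩ with hfK
  have hFmeas : AEStronglyMeasurable F (volume.restrict (Ioi 0)) := by
    apply ContinuousOn.aestronglyMeasurable _ measurableSet_Ioi
    rw [continuousOn_iff_continuous_restrict]
    apply ContinuousMap.continuous_of_continuous_uncurry
    have hequncurry : (Function.uncurry fun (lam : Ioi (0:ℝ)) (x : spectrum ℝ A) =>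
        (Ioi (0:ℝ)).domRestrict F lam x)
        = fun p : Ioi (0:ℝ) × spectrum ℝ A =>
            (p.1 : ℝ) ^ (s-1) * ((p.2 : ℝ)^2 * ((p.2 : ℝ) + (p.1 : ℝ))⁻¹) := by
      funext p
      simp only [Function.uncurry, Set.domRestrict]
      rw [hFpos p.1 p.1.2]
      rfl
    rw [hequncurry]
    apply Continuous.mul
    · apply Continuous.rpow_const (by fun_prop)
      intro p
      exact Or.inl (ne_of_gt p.1.2)
    · apply Continuous.mul (by fun_prop)
      apply Continuous.inv₀ (by fun_prop)
      intro p
      have h1 := (hsA p.2.2).1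
      have h2 : (0:ℝ) < p.1 := p.1.2
      positivity
  have hFnorm : ∀ lam : ℝ, lam ∈ Ioi (0:ℝ) → ‖F lam‖ ≤ lam ^ (s-1) * min 1 lam⁻¹ := by
    intro lam hlam
    have hlam0 : (0:ℝ) < lam := hlam
    have hb0 : (0:ℝ) ≤ lam ^ (s-1) * min 1 lam⁻¹ := by positivity
    rw [hFpos lam hlam0]
    rw [ContinuousMap.norm_le _ hb0]
    rintro ⟨x, hx⟩
    obtain ⟨hx0, hx1⟩ := hsA hx
    simp only [ContinuousMap.coe_mk, Set.domRestrict, hg]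
    rw [Real.norm_eq_abs, abs_of_nonneg (by positivity)]
    apply mul_le_mul_of_nonneg_left _ (by positivity)
    rw [le_min_iff]
    constructor
    · rw [mul_inv_le_iff₀ (by positivity)]
      nlinarith
    · rw [mul_inv_le_iff₀ (by positivity), inv_mul_eq_div, le_div_iff₀ (by positivity)]
      have hx2 : x^2 ≤ 1 := by nlinarith
      nlinarith [mul_le_mul_of_nonneg_right hx2 hlam0.le]
  have hFint : Integrable F (volume.restrict (Ioi 0)) := by
    refine Integrable.mono' (integrableOn_bnd hs0 hs1) hFmeas ?_
    filter_upwards [ae_restrict_mem measurableSet_Ioi] with lam hlam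
    exact hFnorm lam hlam
  have hΦF : ∀ lam : ℝ, lam ∈ Ioi (0:ℝ) →
      Φ (F lam) = lam ^ (s-1) • cfc (fun x : ℝ => x^2 * (x+lam)⁻¹) A := by
    intro lam hlam
    have hlam0 : (0:ℝ) < lam := hlam
    have hc : ContinuousOn (fun x : ℝ => x^2 * (x+lam)⁻¹) (spectrum ℝ A) := by
      apply ContinuousOn.mul (by fun_prop)
      apply ContinuousOn.inv₀ (by fun_prop)
      intro x hx
      have := (hsA hx).1
      positivity
    rw [hΦ_apply, hFpos lam hlam0]
    rw [← cfc_const_mul (lam ^ (s-1)) _ A hc]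
    rw [cfc_apply (g lam) A hA (hgcont lam hlam0)]
  have hop_int : Integrable (fun lam : ℝ => lam ^ (s-1) • cfc (fun x : ℝ => x^2 * (x+lam)⁻¹) A)
      (volume.restrict (Ioi 0)) := by
    refine (Φ.integrable_comp hFint).congr ?_
    filter_upwards [ae_restrict_mem measurableSet_Ioi] with lam hlam
    exact hΦF lam hlam
  refine ⟨hop_int, ?_⟩
  have hFint_eq : ∫ lam in Ioi (0:ℝ), F lam = (I0 s) • fK := by
    ext x
    rw [ContinuousMap.integral_apply hFint]
    have : ∫ lam in Ioi (0:ℝ), F lam x = ∫ lam in Ioi (0:ℝ), g lam x := by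
      refine setIntegral_congr_fun measurableSet_Ioi (fun lam hlam => ?_)
      rw [hFpos lam (show (0:ℝ) < lam from hlam)]
      rfl
    rw [this]
    have hrep := scalar_rep hs0 hs1 (hsA x.2)
    simp only [hg]
    rw [hrep]
    simp [hfK]
  calc (I0 s) • cfc (fun x : ℝ => x ^ (1+s)) A
      = Φ ((I0 s) • fK) := by
        rw [Φ.map_smul, hΦ_apply, cfc_apply (fun x : ℝ => x ^ (1+s)) A hA
          (ContinuousOn.rpow_const continuousOn_id (fun x _ => Or.inr (by linarith)))]
    _ = Φ (∫ lam in Ioi (0:ℝ), F lam) := by rw [hFint_eq]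
    _ = ∫ lam in Ioi (0:ℝ), Φ (F lam) := (ContinuousLinearMap.integral_comp_comm Φ hFint).symm
    _ = ∫ lam in Ioi (0:ℝ), lam ^ (s-1) • cfc (fun x : ℝ => x^2 * (x+lam)⁻¹) A := by
        refine setIntegral_congr_fun measurableSet_Ioi (fun lam hlam => ?_)
        exact hΦF lam hlam

/-! ### The case `1 < u < 2` -/

lemma main12 {A B : H →L[ℂ] H} (hA : IsSelfAdjoint A) (hB : IsSelfAdjoint B)
    (hsA : spectrum ℝ A ⊆ Icc 0 1) (hsB : spectrum ℝ B ⊆ Icc 0 1)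
    {u : ℝ} (hu1 : 1 < u) (hu2 : u < 2) :
    ‖cfc (fun x : ℝ => x ^ u) A - cfc (fun x : ℝ => x ^ u) B‖ ≤ 2 * ‖A - B‖ := by
  set s : ℝ := u - 1 with hs
  have hs0 : 0 < s := by simp [hs]; linarith
  have hs1 : s < 1 := by simp [hs]; linarith
  have hfeq : (fun x : ℝ => x ^ u) = (fun x : ℝ => x ^ (1+s)) := by
    funext x
    congr 1
    rw [hs]; ring
  rw [hfeq]
  obtain ⟨hintA, hrepA⟩ := cfc_rep hs0 hs1 A hA hsA
  obtain ⟨hintB, hrepB⟩ := cfc_rep hs0 hs1 B hB hsB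
  have hdiff : (I0 s) • (cfc (fun x : ℝ => x ^ (1+s)) A - cfc (fun x : ℝ => x ^ (1+s)) B)
      = ∫ lam in Ioi (0:ℝ),
          (lam ^ (s-1) • cfc (fun x : ℝ => x^2 * (x+lam)⁻¹) A
            - lam ^ (s-1) • cfc (fun x : ℝ => x^2 * (x+lam)⁻¹) B) := by
    rw [integral_sub hintA hintB, smul_sub, hrepA, hrepB]
  have hbound : ‖∫ lam in Ioi (0:ℝ),
      (lam ^ (s-1) • cfc (fun x : ℝ => x^2 * (x+lam)⁻¹) A
        - lam ^ (s-1) • cfc (fun x : ℝ => x^2 * (x+lam)⁻¹) B)‖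
      ≤ ∫ lam in Ioi (0:ℝ), (2 * ‖A - B‖) * (lam ^ (s-1) / (1+lam)) := by
    apply norm_integral_le_of_norm_le
    · exact ((integrableOn_I0fn hs0 hs1).const_mul (2 * ‖A - B‖))
    · filter_upwards [ae_restrict_mem measurableSet_Ioi] with lam hlam
      have hlam0 : (0:ℝ) < lam := hlam
      rw [← smul_sub, norm_smul, Real.norm_eq_abs,
        abs_of_nonneg (Real.rpow_nonneg hlam0.le _)]
      have hD := Dlam_norm hA hB hsA hsB hlam0
      calc lam ^ (s-1) * ‖cfc (fun x : ℝ => x^2 * (x+lam)⁻¹) A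
            - cfc (fun x : ℝ => x^2 * (x+lam)⁻¹) B‖
          ≤ lam ^ (s-1) * (2 * (1+lam)⁻¹ * ‖A - B‖) :=
            mul_le_mul_of_nonneg_left hD (Real.rpow_nonneg hlam0.le _)
        _ = (2 * ‖A - B‖) * (lam ^ (s-1) / (1+lam)) := by ring
  have hIval : ∫ lam in Ioi (0:ℝ), (2 * ‖A - B‖) * (lam ^ (s-1) / (1+lam))
      = (2 * ‖A - B‖) * I0 s := by
    rw [integral_const_mul, I0]
  have hI0 := I0_pos hs0 hs1
  have hnorm : (I0 s) * ‖cfc (fun x : ℝ => x ^ (1+s)) A - cfc (fun x : ℝ => x ^ (1+s)) B‖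
      ≤ (2 * ‖A - B‖) * I0 s := by
    calc (I0 s) * ‖cfc (fun x : ℝ => x ^ (1+s)) A - cfc (fun x : ℝ => x ^ (1+s)) B‖
        = ‖(I0 s) • (cfc (fun x : ℝ => x ^ (1+s)) A - cfc (fun x : ℝ => x ^ (1+s)) B)‖ := by
          rw [norm_smul, Real.norm_eq_abs, abs_of_pos hI0]
      _ ≤ (2 * ‖A - B‖) * I0 s := by rw [hdiff, ← hIval]; exact hbound
  nlinarith [norm_nonneg (cfc (fun x : ℝ => x ^ (1+s)) A - cfc (fun x : ℝ => x ^ (1+s)) B)]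

/-! ### Induction on dyadic ranges -/

lemma cfc_sq {v : ℝ} (hv : 0 < v) (A : H →L[ℂ] H) (hA : IsSelfAdjoint A)
    (hsA : spectrum ℝ A ⊆ Icc 0 1) :
    cfc (fun x : ℝ => x ^ (2*v)) A = cfc (fun x : ℝ => x ^ v) A * cfc (fun x : ℝ => x ^ v) A := by
  have hc : ContinuousOn (fun x : ℝ => x ^ v) (spectrum ℝ A) :=
    ContinuousOn.rpow_const continuousOn_id (fun x _ => Or.inr hv.le)
  rw [← cfc_mul _ _ A hc hc]
  apply cfc_congr
  intro x hx
  obtain ⟨hx0, _⟩ := hsA hx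
  show x ^ (2*v) = x ^ v * x ^ v
  rw [show 2*v = v + v by ring]
  exact Real.rpow_add' hx0 (by linarith)

lemma cfc_rpow_norm_le_one {v : ℝ} (hv : 0 < v) (A : H →L[ℂ] H) (hA : IsSelfAdjoint A)
    (hsA : spectrum ℝ A ⊆ Icc 0 1) : ‖cfc (fun x : ℝ => x ^ v) A‖ ≤ 1 := by
  apply norm_cfc_le zero_le_one
  intro x hx
  obtain ⟨hx0, hx1⟩ := hsA hx
  rw [Real.norm_eq_abs, abs_of_nonneg (Real.rpow_nonneg hx0 v)]
  exact Real.rpow_le_one hx0 hx1 hv.le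

lemma sq_diff_norm {A' B' : H →L[ℂ] H} (hnA : ‖A'‖ ≤ 1) (hnB : ‖B'‖ ≤ 1) :
    ‖A' * A' - B' * B'‖ ≤ 2 * ‖A' - B'‖ := by
  have hid : A' * A' - B' * B' = A' * (A' - B') + (A' - B') * B' := by noncomm_ring
  rw [hid]
  calc ‖A' * (A' - B') + (A' - B') * B'‖
      ≤ ‖A' * (A' - B')‖ + ‖(A' - B') * B'‖ := norm_add_le _ _
    _ ≤ ‖A'‖ * ‖A' - B'‖ + ‖A' - B'‖ * ‖B'‖ := add_le_add (norm_mul_le _ _) (norm_mul_le _ _)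
    _ ≤ 1 * ‖A' - B'‖ + ‖A' - B'‖ * 1 := add_le_add
        (mul_le_mul_of_nonneg_right hnA (norm_nonneg _))
        (mul_le_mul_of_nonneg_left hnB (norm_nonneg _))
    _ = 2 * ‖A' - B'‖ := by ring

lemma main_ind {A B : H →L[ℂ] H} (hA : IsSelfAdjoint A) (hB : IsSelfAdjoint B)
    (hsA : spectrum ℝ A ⊆ Icc 0 1) (hsB : spectrum ℝ B ⊆ Icc 0 1)
    (hnA : ‖A‖ ≤ 1) (hnB : ‖B‖ ≤ 1) :
    ∀ n : ℕ, ∀ u : ℝ, 1 < u → u ≤ 2^n →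
      ‖cfc (fun x : ℝ => x ^ u) A - cfc (fun x : ℝ => x ^ u) B‖ ≤ 2 * u * ‖A - B‖ := by
  intro n
  induction n with
  | zero =>
    intro u hu1 hu2
    norm_num at hu2
    linarith
  | succ n ih =>
    intro u hu1 hu2
    rcases lt_or_ge u 2 with hu2' | hu2'
    · -- 1 < u < 2
      have h := main12 hA hB hsA hsB hu1 hu2'
      have hd : (0:ℝ) ≤ ‖A - B‖ := norm_nonneg _
      nlinarith
    · rcases eq_or_lt_of_le hu2' with hu2'' | hu2''
      · -- u = 2
        subst hu2''
        have hone : ∀ (T : H →L[ℂ] H), IsSelfAdjoint T → spectrum ℝ T ⊆ Icc 0 1 →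
            cfc (fun x : ℝ => x ^ (2:ℝ)) T = T * T := by
          intro T hT hsT
          rw [show (fun x : ℝ => x ^ (2:ℝ)) = (fun x : ℝ => x ^ (2*(1:ℝ))) by norm_num]
          rw [cfc_sq one_pos T hT hsT]
          have hid : cfc (fun x : ℝ => x ^ (1:ℝ)) T = T := by
            rw [show (fun x : ℝ => x ^ (1:ℝ)) = (fun x : ℝ => x) by
              funext x; rw [Real.rpow_one]]
            exact cfc_id' ℝ T
          rw [hid]
        rw [hone A hA hsA, hone B hB hsB]
        have := sq_diff_norm hnA hnB
        have hd : (0:ℝ) ≤ ‖A - B‖ := norm_nonneg _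
        nlinarith
      · -- 2 < u
        have hv1 : 1 < u/2 := by linarith
        have hvn : u/2 ≤ 2^n := by
          rw [pow_succ] at hu2
          linarith
        have hv0 : 0 < u/2 := by linarith
        have hu_eq : u = 2 * (u/2) := by ring
        have hAeq : cfc (fun x : ℝ => x ^ u) A
            = cfc (fun x : ℝ => x ^ (u/2)) A * cfc (fun x : ℝ => x ^ (u/2)) A := by
          rw [show (fun x : ℝ => x ^ u) = (fun x : ℝ => x ^ (2*(u/2))) by
            funext x; rw [show 2*(u/2) = u by ring]]
          exact cfc_sq hv0 A hA hsA
        have hBeq : cfc (fun x : ℝ => x ^ u) B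
            = cfc (fun x : ℝ => x ^ (u/2)) B * cfc (fun x : ℝ => x ^ (u/2)) B := by
          rw [show (fun x : ℝ => x ^ u) = (fun x : ℝ => x ^ (2*(u/2))) by
            funext x; rw [show 2*(u/2) = u by ring]]
          exact cfc_sq hv0 B hB hsB
        rw [hAeq, hBeq]
        have hstep := sq_diff_norm (cfc_rpow_norm_le_one hv0 A hA hsA)
          (cfc_rpow_norm_le_one hv0 B hB hsB)
        have hih := ih (u/2) hv1 hvn
        calc ‖cfc (fun x : ℝ => x ^ (u/2)) A * cfc (fun x : ℝ => x ^ (u/2)) A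
              - cfc (fun x : ℝ => x ^ (u/2)) B * cfc (fun x : ℝ => x ^ (u/2)) B‖
            ≤ 2 * ‖cfc (fun x : ℝ => x ^ (u/2)) A - cfc (fun x : ℝ => x ^ (u/2)) B‖ := hstep
          _ ≤ 2 * (2 * (u/2) * ‖A - B‖) := by linarith
          _ = 2 * u * ‖A - B‖ := by ring

lemma spec_subset_Icc {A : H →L[ℂ] H} (hA : A.IsPositive) (hA1 : ‖A‖ ≤ 1) :
    spectrum ℝ A ⊆ Icc 0 1 := by
  have h0 : (0:H→L[ℂ]H) ≤ A := (ContinuousLinearMap.nonneg_iff_isPositive A).mpr hA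
  intro x hx
  refine ⟨spectrum_nonneg_of_nonneg h0 hx, ?_⟩
  calc x ≤ |x| := le_abs_self x
  _ = ‖x‖ := rfl
  _ ≤ ‖A‖ := spectrum.norm_le_norm_of_mem hx
  _ ≤ 1 := hA1

end Stmt8Aux

/-- for positive self-adjoint operators with ‖A‖,‖B‖ ≤ 1 and u > 1,
‖A^u - B^u‖ ≤ 2u‖A - B‖, powers via the continuous functional calculus. -/
theorem stmt_8 {H : Type*} [NormedAddCommGroup H] [InnerProductSpace ℂ H] [CompleteSpace H]
    (A B : H →L[ℂ] H) (hA : A.IsPositive) (hB : B.IsPositive)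
    (hA1 : ‖A‖ ≤ 1) (hB1 : ‖B‖ ≤ 1) (u : ℝ) (hu : 1 < u) :
    ‖cfc (fun x : ℝ => x ^ u) A - cfc (fun x : ℝ => x ^ u) B‖ ≤ 2 * u * ‖A - B‖ := by
  rcases subsingleton_or_nontrivial H with hH | hH
  · haveI : Subsingleton (H →L[ℂ] H) :=
      ⟨fun f g => ContinuousLinearMap.ext fun x => Subsingleton.elim _ _⟩
    have h0 : cfc (fun x : ℝ => x ^ u) A - cfc (fun x : ℝ => x ^ u) B = 0 :=
      Subsingleton.elim _ _
    rw [h0, norm_zero]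
    have h1 : (0:ℝ) ≤ ‖A - B‖ := norm_nonneg _
    nlinarith
  · have hsA := Stmt8Aux.spec_subset_Icc hA hA1
    have hsB := Stmt8Aux.spec_subset_Icc hB hB1
    obtain ⟨n, hn⟩ := pow_unbounded_of_one_lt u (one_lt_two (α := ℝ))
    exact Stmt8Aux.main_ind hA.isSelfAdjoint hB.isSelfAdjoint hsA hsB hA1 hB1 n u hu hn.le
end

section
/- Let $A, B$ be positive self-adjoint operators whose spectra are contained in $(v_2, 1)$ for some $v_2 \in (0,1)$, and let $v_1 \in (0,1)$. Then $\|A^{v_1} - B^{v_1}\| \le v_1 v_2^{v_1 - 1} \|A - B\|$. -/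
open MeasureTheory Set

set_option synthInstance.maxHeartbeats 1000000
set_option maxHeartbeats 1000000

namespace Stmt9Aux

variable {p : ℝ}

lemma scalar_integrableOn (hp0 : 0 < p) (hp1 : p < 1) {x : ℝ} (hx : 0 < x) :
    IntegrableOn (fun t : ℝ => t ^ (p - 1) * (x / (x + t))) (Ioi 0) := by
  have hmeas : ∀ s : Set ℝ, MeasurableSet s → s ⊆ Ioi 0 →
      AEStronglyMeasurable (fun t : ℝ => t ^ (p - 1) * (x / (x + t))) (volume.restrict s) := by
    intro s hs hsub
    refine (ContinuousOn.aestronglyMeasurable ?_ hs)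
    refine ContinuousOn.mul ?_ ?_
    · exact continuousOn_id.rpow_const fun t ht => Or.inl (ne_of_gt (hsub ht))
    · refine continuousOn_const.div (continuousOn_const.add continuousOn_id) ?_
      intro t ht
      have := hsub ht
      simp only [mem_Ioi] at this
      positivity
  have h1 : IntegrableOn (fun t : ℝ => t ^ (p - 1) * (x / (x + t))) (Ioc 0 1) := by
    have hbase : IntegrableOn (fun t : ℝ => t ^ (p - 1)) (Ioc 0 1) := by
      have h := intervalIntegral.intervalIntegrable_rpow' (a := 0) (b := 1) (show (-1:ℝ) < p - 1 by linarith)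
      rwa [intervalIntegrable_iff_integrableOn_Ioc_of_le (by norm_num)] at h
    refine hbase.mono' (hmeas _ measurableSet_Ioc Ioc_subset_Ioi_self) ?_
    filter_upwards [ae_restrict_mem measurableSet_Ioc] with t ht
    have ht0 : 0 < t := ht.1
    have h1 : 0 ≤ x / (x + t) := by positivity
    have h2 : x / (x + t) ≤ 1 := by
      rw [div_le_one (by linarith)]; linarith
    rw [Real.norm_eq_abs, abs_mul, abs_of_nonneg (Real.rpow_nonneg ht0.le _),
      abs_of_nonneg h1]
    calc t ^ (p - 1) * (x / (x + t)) ≤ t ^ (p - 1) * 1 := by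
          exact mul_le_mul_of_nonneg_left h2 (Real.rpow_nonneg ht0.le _)
      _ = t ^ (p - 1) := mul_one _
  have h2 : IntegrableOn (fun t : ℝ => t ^ (p - 1) * (x / (x + t))) (Ioi 1) := by
    have hbase : IntegrableOn (fun t : ℝ => x * t ^ (p - 2)) (Ioi 1) :=
      (integrableOn_Ioi_rpow_of_lt (by linarith) one_pos).const_mul x
    refine hbase.mono' (hmeas _ measurableSet_Ioi (fun t ht => mem_Ioi.mpr (lt_trans one_pos ht))) ?_
    filter_upwards [ae_restrict_mem measurableSet_Ioi] with t ht
    have ht0 : (0:ℝ) < t := lt_trans one_pos ht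
    have h1 : 0 ≤ x / (x + t) := by positivity
    rw [Real.norm_eq_abs, abs_mul, abs_of_nonneg (Real.rpow_nonneg ht0.le _),
      abs_of_nonneg h1]
    have key : x / (x + t) ≤ x / t := by
      apply div_le_div_of_nonneg_left hx.le ht0; linarith
    calc t ^ (p - 1) * (x / (x + t)) ≤ t ^ (p - 1) * (x / t) :=
          mul_le_mul_of_nonneg_left key (Real.rpow_nonneg ht0.le _)
      _ = x * t ^ (p - 2) := by
          rw [show p - 1 = (p - 2) + 1 by ring, Real.rpow_add_one ht0.ne']
          field_simp
  have := h1.union h2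
  rwa [Ioc_union_Ioi_eq_Ioi (by norm_num : (0:ℝ) ≤ 1)] at this

lemma scalar_eval (hp0 : 0 < p) (hp1 : p < 1) {x : ℝ} (hx : 0 < x) :
    ∫ t in Ioi (0:ℝ), t ^ (p - 1) * (x / (x + t))
      = (∫ s in Ioi (0:ℝ), s ^ (p - 1) * (1 / (1 + s))) * x ^ p := by
  have h := integral_comp_mul_left_Ioi (fun t => t ^ (p - 1) * (x / (x + t))) 0 hx
  rw [mul_zero] at h
  have heq : EqOn (fun s : ℝ => (x * s) ^ (p - 1) * (x / (x + x * s)))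
      (fun s : ℝ => x ^ (p - 1) * (s ^ (p - 1) * (1 / (1 + s)))) (Ioi 0) := by
    intro s hs
    simp only [mem_Ioi] at hs
    have h1 : (x * s) ^ (p - 1) = x ^ (p - 1) * s ^ (p - 1) :=
      Real.mul_rpow hx.le hs.le
    have h2 : x / (x + x * s) = 1 / (1 + s) := by
      rw [show x + x * s = x * (1 + s) by ring]
      rw [eq_div_iff (by positivity)]
      field_simp
    simp only
    rw [h1, h2]
    ring
  rw [setIntegral_congr_fun measurableSet_Ioi heq, integral_const_mul, smul_eq_mul,
    eq_comm, inv_mul_eq_iff_eq_mul₀ hx.ne'] at h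
  have h3 : x * x ^ (p - 1) = x ^ p := by
    rw [mul_comm, ← Real.rpow_add_one hx.ne']; norm_num
  rw [h, ← h3]
  ring

noncomputable def I0 (p : ℝ) : ℝ := ∫ s in Ioi (0:ℝ), s ^ (p - 1) * (1 / (1 + s))

lemma I0_pos (hp0 : 0 < p) (hp1 : p < 1) : 0 < I0 p := by
  rw [I0, setIntegral_pos_iff_support_of_nonneg_ae]
  · refine lt_of_lt_of_le ?_ (measure_mono (subset_inter (fun s hs => ?_) Subset.rfl))
    · rw [Real.volume_Ioi]; exact ENNReal.zero_lt_top
    · simp only [mem_Ioi] at hs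
      have : (0:ℝ) < s ^ (p - 1) * (1 / (1 + s)) := by positivity
      exact Function.mem_support.mpr this.ne'
  · filter_upwards [ae_restrict_mem measurableSet_Ioi] with s hs
    simp only [mem_Ioi] at hs
    positivity
  · exact scalar_integrableOn hp0 hp1 one_pos

lemma scalar_key (hp0 : 0 < p) (hp1 : p < 1) {v₂ x D : ℝ} (hv₂ : 0 < v₂)
    (hx : x ∈ Ioo v₂ 1) (hD : 0 ≤ D) :
    (x + D) ^ p ≤ x ^ p + p * v₂ ^ (p - 1) * D := by
  have hx0 : 0 < x := lt_trans hv₂ hx.1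
  have hB : (1 + D / x) ^ p ≤ 1 + p * (D / x) :=
    rpow_one_add_le_one_add_mul_self (le_trans (by norm_num : (-1:ℝ) ≤ 0) (by positivity)) hp0.le hp1.le
  have h1 : (x + D) ^ p = x ^ p * (1 + D / x) ^ p := by
    rw [← Real.mul_rpow hx0.le (by positivity)]
    congr 1
    field_simp
  have h2 : x ^ p * (1 + D / x) ^ p ≤ x ^ p * (1 + p * (D / x)) :=
    mul_le_mul_of_nonneg_left hB (Real.rpow_nonneg hx0.le _)
  have h3 : x ^ p * (1 + p * (D / x)) = x ^ p + p * x ^ (p - 1) * D := by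
    have hxp : x ^ p = x ^ (p - 1) * x := by
      rw [← Real.rpow_add_one hx0.ne']; norm_num
    rw [hxp]
    field_simp
  have h4 : x ^ (p - 1) ≤ v₂ ^ (p - 1) :=
    Real.rpow_le_rpow_of_nonpos hv₂ hx.1.le (by linarith)
  calc (x + D) ^ p ≤ x ^ p + p * x ^ (p - 1) * D := by rw [h1]; linarith [h2, h3.le]
    _ ≤ x ^ p + p * v₂ ^ (p - 1) * D := by
        have := mul_le_mul_of_nonneg_right (mul_le_mul_of_nonneg_left h4 hp0.le) hD
        linarith

section Operators

variable {H : Type*} [NormedAddCommGroup H] [InnerProductSpace ℂ H] [CompleteSpace H]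

local notation "𝒜" => H →L[ℂ] H

lemma op_smul_nonneg {r : ℝ} (hr : 0 ≤ r) {a : 𝒜} (ha : 0 ≤ a) : 0 ≤ r • a := by
  have hsa : IsSelfAdjoint a := .of_nonneg ha
  rw [← cfc_const_mul_id r a hsa]
  exact cfc_nonneg fun x hx => mul_nonneg hr (spectrum_nonneg_of_nonneg ha hx)

lemma op_smul_le_smul {r : ℝ} (hr : 0 ≤ r) {a b : 𝒜} (hab : a ≤ b) : r • a ≤ r • b := by
  have h := op_smul_nonneg hr (sub_nonneg.mpr hab)
  rw [smul_sub] at h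
  exact sub_nonneg.mp h

lemma op_one_nonneg : (0:𝒜) ≤ 1 := by simpa using star_mul_self_nonneg (1 : 𝒜)

lemma op_algebraMap_nonneg {r : ℝ} (hr : 0 ≤ r) : (0:𝒜) ≤ algebraMap ℝ 𝒜 r := by
  rw [Algebra.algebraMap_eq_smul_one]
  exact op_smul_nonneg hr op_one_nonneg

lemma op_integral_nonneg {X : Type*} [MeasurableSpace X] {μ : Measure X} {h : X → 𝒜}
    (hint : Integrable h μ) (hpos : ∀ t, 0 ≤ h t) : 0 ≤ ∫ t, h t ∂μ := by
  rw [ContinuousLinearMap.nonneg_iff_isPositive]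
  have hP : ∀ t, (h t).IsPositive := fun t =>
    (ContinuousLinearMap.nonneg_iff_isPositive _).mp (hpos t)
  constructor
  · have hst : ∀ t, star (h t) = h t := fun t => (hP t).isSelfAdjoint
    have e := ContinuousLinearMap.integral_comp_comm
      ((starL' ℝ : 𝒜 ≃L[ℝ] 𝒜) : 𝒜 →L[ℝ] 𝒜) hint
    simp only [ContinuousLinearEquiv.coe_coe, starL'_apply, hst] at e
    exact ContinuousLinearMap.isSelfAdjoint_iff_isSymmetric.mp e.symm
  · intro x
    have hint2 : Integrable (fun t => h t x) μ := hint.apply_continuousLinearMap x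
    rw [ContinuousLinearMap.reApplyInnerSelf_apply,
      ContinuousLinearMap.integral_apply hint x, inner_re_symm]
    have e2 : (inner ℂ x (∫ t, h t x ∂μ) : ℂ) = ∫ t, (inner ℂ x (h t x) : ℂ) ∂μ := by
      simpa using (ContinuousLinearMap.integral_comp_comm (innerSL ℂ x) hint2).symm
    have hint3 : Integrable (fun t => (inner ℂ x (h t x) : ℂ)) μ := by
      simpa using (innerSL ℂ x).integrable_comp hint2
    rw [e2, ← integral_re hint3]
    exact integral_nonneg fun t => (hP t).re_inner_nonneg_right x

lemma op_frac_mono (hp0 : 0 < p) {t : ℝ} (ht : 0 < t) {S T : 𝒜}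
    (hS : 0 ≤ S) (hT : 0 ≤ T) (hST : S ≤ T) :
    cfc (fun x : ℝ => t ^ (p - 1) * (x / (x + t))) S
      ≤ cfc (fun x : ℝ => t ^ (p - 1) * (x / (x + t))) T := by
  have hSsa : IsSelfAdjoint S := .of_nonneg hS
  have hTsa : IsSelfAdjoint T := .of_nonneg hT
  -- For any nonneg operator R, rewrite cfc in terms of the inverse of R + t•1.
  have key : ∀ (R : 𝒜) (hR : 0 ≤ R) (hu : IsUnit (R + algebraMap ℝ 𝒜 t)),
      cfc (fun x : ℝ => t ^ (p - 1) * (x / (x + t))) R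
        = t ^ (p - 1) • (1 - t • (hu.unit⁻¹ : 𝒜ˣ)) := by
    intro R hR hu
    have hRsa : IsSelfAdjoint R := .of_nonneg hR
    have hspec : ∀ x ∈ spectrum ℝ R, 0 ≤ x := fun x hx =>
      spectrum_nonneg_of_nonneg hR hx
    have hne : ∀ x ∈ spectrum ℝ R, x + t ≠ 0 := fun x hx => by
      have := hspec x hx; positivity
    have hcont1 : ContinuousOn (fun x : ℝ => x / (x + t)) (spectrum ℝ R) :=
      continuousOn_id.div (continuousOn_id.add continuousOn_const) hne
    have hcont2 : ContinuousOn (fun x : ℝ => (x + t)⁻¹) (spectrum ℝ R) :=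
      (continuousOn_id.add continuousOn_const).inv₀ hne
    have e0 : cfc (fun x : ℝ => t ^ (p - 1) * (x / (x + t))) R
        = t ^ (p - 1) • cfc (fun x : ℝ => x / (x + t)) R :=
      cfc_const_mul _ _ _ hcont1
    have e1 : cfc (fun x : ℝ => x / (x + t)) R
        = cfc (fun x : ℝ => 1 - t * (x + t)⁻¹) R := by
      apply cfc_congr
      intro x hx
      have hxt : x + t ≠ 0 := hne x hx
      field_simp
      ring
    have e2 : cfc (fun x : ℝ => 1 - t * (x + t)⁻¹) R
        = cfc (fun _ : ℝ => (1:ℝ)) R - t • cfc (fun x : ℝ => (x + t)⁻¹) R := by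
      rw [cfc_sub (fun _ : ℝ => (1:ℝ)) (fun x : ℝ => t * (x + t)⁻¹) R continuousOn_const
        (continuousOn_const.mul hcont2),
        cfc_const_mul t (fun x : ℝ => (x + t)⁻¹) R hcont2]
    have e3 : cfc (fun _ : ℝ => (1:ℝ)) R = 1 := by
      simpa using cfc_const (1:ℝ) R hRsa
    have e4 : cfc (fun x : ℝ => x + t) R = R + algebraMap ℝ 𝒜 t := by
      have h := cfc_add_const t (fun x : ℝ => x) R continuousOn_id hRsa
      rwa [cfc_id' ℝ R hRsa] at h
    have e5 : cfc (fun x : ℝ => (x + t)⁻¹) R = ((hu.unit⁻¹ : 𝒜ˣ) : 𝒜) := by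
      have := cfc_inv (R := ℝ) (a := R) (f := fun x : ℝ => x + t) hne
        (continuousOn_id.add continuousOn_const) hRsa
      rw [e4] at this
      rw [this]
      calc Ring.inverse (R + algebraMap ℝ 𝒜 t) = Ring.inverse ((hu.unit : 𝒜)) := by
            rw [hu.unit_spec]
        _ = ((hu.unit⁻¹ : 𝒜ˣ) : 𝒜) := Ring.inverse_unit _
    rw [e0, e1, e2, e3, e5]
  have huS : IsUnit (S + algebraMap ℝ 𝒜 t) := by
    refine (fun hu hle => CStarAlgebra.isUnit_of_le _ hle
      (IsUnit.isStrictlyPositive hu (op_algebraMap_nonneg ht.le))) ?_ ?_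
    · exact (isUnit_iff_ne_zero.mpr ht.ne').map (algebraMap ℝ 𝒜)
    · exact le_add_of_nonneg_left hS
  have huT : IsUnit (T + algebraMap ℝ 𝒜 t) := by
    refine (fun hu hle => CStarAlgebra.isUnit_of_le _ hle
      (IsUnit.isStrictlyPositive hu (op_algebraMap_nonneg ht.le))) ?_ ?_
    · exact (isUnit_iff_ne_zero.mpr ht.ne').map (algebraMap ℝ 𝒜)
    · exact le_add_of_nonneg_left hT
  rw [key S hS huS, key T hT huT]
  have hinv : ((huT.unit⁻¹ : 𝒜ˣ) : 𝒜) ≤ ((huS.unit⁻¹ : 𝒜ˣ) : 𝒜) := by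
    refine CStarAlgebra.inv_le_inv ?_ ?_
    · rw [huS.unit_spec]
      exact add_nonneg hS (op_algebraMap_nonneg ht.le)
    · rw [huS.unit_spec, huT.unit_spec]
      exact add_le_add_left hST _
  refine op_smul_le_smul (Real.rpow_nonneg ht.le _) ?_
  have := op_smul_le_smul ht.le hinv
  exact sub_le_sub_left this 1

lemma integrable_comap_iff {E : Type*} [NormedAddCommGroup E] (F : ℝ → E) :
    Integrable (fun t : ↥(Ioi (0:ℝ)) => F (t : ℝ)) (volume.comap Subtype.val)
      ↔ IntegrableOn F (Ioi 0) := by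
  have hemb := MeasurableEmbedding.subtype_coe (measurableSet_Ioi (a := (0:ℝ)))
  rw [show (fun t : ↥(Ioi (0:ℝ)) => F (t : ℝ)) = F ∘ Subtype.val from rfl,
    ← hemb.integrable_map_iff, map_comap_subtype_coe measurableSet_Ioi]
  exact Iff.rfl

lemma op_rep (hp0 : 0 < p) (hp1 : p < 1) (T : 𝒜) (hsa : IsSelfAdjoint T) {M : ℝ}
    (hM0 : 0 < M) (hspec : spectrum ℝ T ⊆ Ioo 0 M) :
    Integrable (fun t : ↥(Ioi (0:ℝ)) =>
        cfc (fun x : ℝ => (t : ℝ) ^ (p - 1) * (x / (x + (t : ℝ)))) T)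
      (volume.comap Subtype.val)
    ∧ I0 p • cfc (fun x : ℝ => x ^ p) T
      = ∫ t : ↥(Ioi (0:ℝ)),
          cfc (fun x : ℝ => (t : ℝ) ^ (p - 1) * (x / (x + (t : ℝ)))) T
          ∂(volume.comap Subtype.val) := by
  set μc : Measure ↥(Ioi (0:ℝ)) := volume.comap Subtype.val with hμc
  set f : ↥(Ioi (0:ℝ)) → ℝ → ℝ := fun t x => (t : ℝ) ^ (p - 1) * (x / (x + (t : ℝ))) with hfdef
  have hspec' : ∀ x ∈ spectrum ℝ T, 0 < x ∧ x < M := fun x hx => ⟨(hspec hx).1, (hspec hx).2⟩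
  have hf₁ : ∀ t, ContinuousOn (f t) (spectrum ℝ T) := by
    intro t
    refine continuousOn_const.mul (continuousOn_id.div
      (continuousOn_id.add continuousOn_const) ?_)
    intro x hx
    have h1 := (hspec' x hx).1
    have h2 : (0:ℝ) < (t : ℝ) := t.2
    positivity
  have huncur : Continuous (Function.uncurry
      (fun (t : ↥(Ioi (0:ℝ))) (z : spectrum ℝ T) => f t (z : ℝ))) := by
    refine Continuous.mul ?_ ?_
    · refine Continuous.rpow_const (continuous_subtype_val.comp continuous_fst) ?_
      intro q
      exact Or.inl (ne_of_gt (Set.mem_Ioi.mp q.1.2))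
    · refine Continuous.div (continuous_subtype_val.comp continuous_snd)
        ((continuous_subtype_val.comp continuous_snd).add
          (continuous_subtype_val.comp continuous_fst)) ?_
      intro q
      have h1 := (hspec' _ q.2.2).1
      have h2 : (0:ℝ) < (q.1 : ℝ) := q.1.2
      positivity
  have hf₂ : Continuous (fun t => (⟨_, (hf₁ t).restrict⟩ : C(spectrum ℝ T, ℝ))) := by
    have heq : (fun t => (⟨_, (hf₁ t).restrict⟩ : C(spectrum ℝ T, ℝ)))
        = fun t => (ContinuousMap.curry ⟨_, huncur⟩) t := by
      ext t z
      rfl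
    rw [heq]
    exact (ContinuousMap.curry _).continuous
  set bound : ↥(Ioi (0:ℝ)) → ℝ := fun t => (t : ℝ) ^ (p - 1) * (M / (M + (t : ℝ)))
    with hbdef
  have hbound : ∀ t, ∀ z ∈ spectrum ℝ T, ‖f t z‖ ≤ ‖bound t‖ := by
    intro t z hz
    have ht : (0:ℝ) < (t : ℝ) := t.2
    obtain ⟨hz0, hzM⟩ := hspec' z hz
    have key : z / (z + (t : ℝ)) ≤ M / (M + (t : ℝ)) := by
      rw [div_le_div_iff₀ (by positivity) (by positivity)]
      nlinarith
    have h1 : ‖f t z‖ = f t z := by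
      rw [Real.norm_eq_abs, abs_of_nonneg (by positivity)]
    rw [h1]
    exact le_trans (mul_le_mul_of_nonneg_left key (Real.rpow_nonneg ht.le _)) (le_abs_self _)
  have hbint : Integrable bound μc :=
    (integrable_comap_iff (fun s : ℝ => s ^ (p - 1) * (M / (M + s)))).mpr
      (scalar_integrableOn hp0 hp1 hM0)
  have hbfi : HasFiniteIntegral bound μc := hbint.hasFiniteIntegral
  have hfc : ContinuousOn (Function.uncurry f) (univ ×ˢ spectrum ℝ T) := by
    refine ContinuousOn.mul ?_ ?_
    · exact ((continuous_subtype_val.comp continuous_fst).rpow_const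
        fun q => Or.inl (ne_of_gt (Set.mem_Ioi.mp q.1.2))).continuousOn
    · refine ContinuousOn.div continuous_snd.continuousOn
        ((continuous_snd.add (continuous_subtype_val.comp continuous_fst)).continuousOn) ?_
      intro q hq
      have h1 := (hspec' _ hq.2).1
      have h2 : (0:ℝ) < (q.1 : ℝ) := q.1.2
      positivity
  have hb0 : ∀ t, 0 ≤ bound t := fun t => by
    have ht : (0:ℝ) < (t : ℝ) := t.2
    simp only [hbdef]
    positivity
  have main := cfc_integral (𝕜 := ℝ) f bound T hfc
    (Filter.Eventually.of_forall fun t z hz =>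
      (hbound t z hz).trans (le_of_eq (Real.norm_of_nonneg (hb0 t)))) hbfi hsa
  have fc_int : Integrable (fun t => (⟨_, (hf₁ t).restrict⟩ : C(spectrum ℝ T, ℝ))) μc := by
    refine ⟨hf₂.aestronglyMeasurable, ?_⟩
    refine hbfi.mono (Filter.Eventually.of_forall fun t => ?_)
    exact (ContinuousMap.norm_le _ (norm_nonneg (bound t))).mpr fun z => hbound t z z.2
  have op_int : Integrable (fun t => cfc (f t) T) μc := by
    have h := (cfcL (R := ℝ) hsa).integrable_comp fc_int
    exact h.congr (Filter.Eventually.of_forall fun t =>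
      (cfc_apply (f t) T hsa (hf₁ t)).symm)
  have hscal : (spectrum ℝ T).EqOn (fun r => ∫ t, f t r ∂μc) (fun r => I0 p * r ^ p) := by
    intro r hr
    obtain ⟨hr0, hrM⟩ := hspec' r hr
    have h1 : ∫ t, f t r ∂μc = ∫ t in Ioi (0:ℝ), t ^ (p - 1) * (r / (r + t)) :=
      integral_subtype_comap (μ := volume) measurableSet_Ioi
        (fun s : ℝ => s ^ (p - 1) * (r / (r + s)))
    simp only
    rw [h1, scalar_eval hp0 hp1 hr0, I0]
  have lhs_eq : cfc (fun r : ℝ => ∫ t, f t r ∂μc) T = I0 p • cfc (fun x : ℝ => x ^ p) T := by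
    rw [cfc_congr hscal]
    exact cfc_const_mul (I0 p) (fun x : ℝ => x ^ p) T
      (ContinuousOn.rpow_const continuousOn_id fun x hx => Or.inl (ne_of_gt (hspec' x hx).1))
  exact ⟨op_int, by rw [← lhs_eq, main]⟩

lemma op_one_sided (hp0 : 0 < p) (hp1 : p < 1) {v₂ : ℝ} (hv₂ : 0 < v₂)
    (A B : 𝒜) (hA : 0 ≤ A) (hB : 0 ≤ B)
    (hsA : spectrum ℝ A ⊆ Ioo v₂ 1) (hsB : spectrum ℝ B ⊆ Ioo v₂ 1) :
    cfc (fun x : ℝ => x ^ p) B - cfc (fun x : ℝ => x ^ p) A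
      ≤ algebraMap ℝ 𝒜 (p * v₂ ^ (p - 1) * ‖A - B‖) := by
  set D : ℝ := ‖A - B‖ with hD
  have hD0 : 0 ≤ D := norm_nonneg _
  have hAsa : IsSelfAdjoint A := .of_nonneg hA
  have hBsa : IsSelfAdjoint B := .of_nonneg hB
  set A' : 𝒜 := A + algebraMap ℝ 𝒜 D with hA'
  have hA'0 : 0 ≤ A' := add_nonneg hA (op_algebraMap_nonneg hD0)
  have hA'sa : IsSelfAdjoint A' := .of_nonneg hA'0
  have hBA' : B ≤ A' := by
    have h1 : B - A ≤ algebraMap ℝ 𝒜 ‖B - A‖ :=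
      IsSelfAdjoint.le_algebraMap_norm_self (hBsa.sub hAsa)
    rw [norm_sub_rev] at h1
    have h2 := sub_le_iff_le_add.mp h1
    rwa [add_comm] at h2
  have hsA' : spectrum ℝ A' ⊆ Ioo 0 (1 + D) := by
    intro x hx
    rw [hA', ← spectrum.add_singleton_eq] at hx
    obtain ⟨y, hy, d, hd, rfl⟩ := Set.mem_add.mp hx
    obtain rfl := Set.mem_singleton_iff.mp hd
    obtain ⟨h1, h2⟩ := hsA hy
    exact ⟨by linarith, by linarith⟩
  have hsB' : spectrum ℝ B ⊆ Ioo 0 (1 + D) := fun x hx =>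
    ⟨lt_trans hv₂ (hsB hx).1, lt_of_lt_of_le (hsB hx).2 (by linarith)⟩
  have h1D : (0:ℝ) < 1 + D := by linarith
  obtain ⟨hintB, hrepB⟩ := op_rep hp0 hp1 B hBsa h1D hsB'
  obtain ⟨hintA', hrepA'⟩ := op_rep hp0 hp1 A' hA'sa h1D hsA'
  have hmono : I0 p • cfc (fun x : ℝ => x ^ p) B ≤ I0 p • cfc (fun x : ℝ => x ^ p) A' := by
    rw [hrepB, hrepA']
    have hpos : 0 ≤ ∫ t : ↥(Ioi (0:ℝ)),
        (cfc (fun x : ℝ => (t:ℝ) ^ (p - 1) * (x / (x + (t:ℝ)))) A'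
          - cfc (fun x : ℝ => (t:ℝ) ^ (p - 1) * (x / (x + (t:ℝ)))) B)
        ∂(volume.comap Subtype.val) := by
      refine op_integral_nonneg (hintA'.sub hintB) fun t => ?_
      exact sub_nonneg.mpr (op_frac_mono hp0 (Set.mem_Ioi.mp t.2) hB hA'0 hBA')
    rw [integral_sub hintA' hintB] at hpos
    exact sub_nonneg.mp hpos
  have hI := I0_pos hp0 hp1
  have hBA'' : cfc (fun x : ℝ => x ^ p) B ≤ cfc (fun x : ℝ => x ^ p) A' := by
    have h := op_smul_le_smul (inv_nonneg.mpr hI.le) hmono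
    rwa [smul_smul, smul_smul, inv_mul_cancel₀ hI.ne', one_smul, one_smul] at h
  have hgA : cfc (fun x : ℝ => x + D) A = A' := by
    have h := cfc_add_const D (fun x : ℝ => x) A continuousOn_id hAsa
    rwa [cfc_id' ℝ A hAsa] at h
  have hcont2 : ContinuousOn (fun x : ℝ => x + D) (spectrum ℝ A) :=
    continuousOn_id.add continuousOn_const
  have hcont1 : ContinuousOn (fun x : ℝ => x ^ p)
      ((fun x : ℝ => x + D) '' spectrum ℝ A) := by
    refine ContinuousOn.rpow_const continuousOn_id fun x hx => Or.inl ?_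
    obtain ⟨y, hy, rfl⟩ := hx
    have := (hsA hy).1
    have : (0:ℝ) < y + D := by linarith
    exact this.ne'
  have hcomp : cfc (fun x : ℝ => x ^ p) A' = cfc (fun x : ℝ => (x + D) ^ p) A := by
    rw [cfc_comp' (fun x : ℝ => x ^ p) (fun x : ℝ => x + D) A hcont1 hcont2 hAsa, hgA]
  have hrpowA : ContinuousOn (fun x : ℝ => x ^ p) (spectrum ℝ A) :=
    ContinuousOn.rpow_const continuousOn_id fun x hx =>
      Or.inl (ne_of_gt (lt_trans hv₂ (hsA hx).1))
  have hpoint : cfc (fun x : ℝ => (x + D) ^ p) A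
      ≤ cfc (fun x : ℝ => x ^ p + p * v₂ ^ (p - 1) * D) A := by
    refine cfc_mono (fun x hx => scalar_key hp0 hp1 hv₂ (hsA hx) hD0) ?_ ?_
    · refine ContinuousOn.rpow_const (continuousOn_id.add continuousOn_const)
        fun x hx => Or.inl ?_
      have := (hsA hx).1
      have h2 : (0:ℝ) < x + D := by linarith
      exact h2.ne'
    · exact hrpowA.add continuousOn_const
  have hsplit : cfc (fun x : ℝ => x ^ p + p * v₂ ^ (p - 1) * D) A
      = cfc (fun x : ℝ => x ^ p) A + algebraMap ℝ 𝒜 (p * v₂ ^ (p - 1) * D) :=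
    cfc_add_const _ (fun x : ℝ => x ^ p) A hrpowA hAsa
  have hfinal : cfc (fun x : ℝ => x ^ p) B
      ≤ cfc (fun x : ℝ => x ^ p) A + algebraMap ℝ 𝒜 (p * v₂ ^ (p - 1) * D) := by
    calc cfc (fun x : ℝ => x ^ p) B ≤ cfc (fun x : ℝ => x ^ p) A' := hBA''
      _ = cfc (fun x : ℝ => (x + D) ^ p) A := hcomp
      _ ≤ cfc (fun x : ℝ => x ^ p + p * v₂ ^ (p - 1) * D) A := hpoint
      _ = cfc (fun x : ℝ => x ^ p) A + algebraMap ℝ 𝒜 (p * v₂ ^ (p - 1) * D) := hsplit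
  rw [sub_le_iff_le_add, add_comm]
  exact hfinal

end Operators

end Stmt9Aux

/-- for positive self-adjoint operators with spectra in (v₂,1) and v₁ ∈ (0,1),
‖A^{v₁} - B^{v₁}‖ ≤ v₁ v₂^{v₁-1} ‖A - B‖. -/
theorem stmt_9 {H : Type*} [NormedAddCommGroup H] [InnerProductSpace ℂ H] [CompleteSpace H]
    (A B : H →L[ℂ] H) (hA : A.IsPositive) (hB : B.IsPositive)
    (v₁ v₂ : ℝ) (hv₁ : v₁ ∈ Set.Ioo (0:ℝ) 1) (hv₂ : v₂ ∈ Set.Ioo (0:ℝ) 1)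
    (hsA : spectrum ℝ A ⊆ Set.Ioo v₂ 1) (hsB : spectrum ℝ B ⊆ Set.Ioo v₂ 1) :
    ‖cfc (fun x : ℝ => x ^ v₁) A - cfc (fun x : ℝ => x ^ v₁) B‖
      ≤ v₁ * v₂ ^ (v₁ - 1) * ‖A - B‖ := by
  obtain ⟨hv₁0, hv₁1⟩ := hv₁
  obtain ⟨hv₂0, hv₂1⟩ := hv₂
  have hA0 : 0 ≤ A := (ContinuousLinearMap.nonneg_iff_isPositive A).mpr hA
  have hB0 : 0 ≤ B := (ContinuousLinearMap.nonneg_iff_isPositive B).mpr hB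
  set c : ℝ := v₁ * v₂ ^ (v₁ - 1) * ‖A - B‖ with hc
  have hc0 : 0 ≤ c := by
    have := Real.rpow_nonneg hv₂0.le (v₁ - 1)
    positivity
  have h1 := Stmt9Aux.op_one_sided hv₁0 hv₁1 hv₂0 A B hA0 hB0 hsA hsB
  have h2 := Stmt9Aux.op_one_sided hv₁0 hv₁1 hv₂0 B A hB0 hA0 hsB hsA
  rw [norm_sub_rev] at h2
  set T : H →L[ℂ] H := cfc (fun x : ℝ => x ^ v₁) A - cfc (fun x : ℝ => x ^ v₁) B with hT
  have hTsa : IsSelfAdjoint T :=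
    IsSelfAdjoint.sub (cfc_predicate (fun x : ℝ => x ^ v₁) A)
      (cfc_predicate (fun x : ℝ => x ^ v₁) B)
  have hub : ∀ x ∈ spectrum ℝ T, x ≤ c := by
    intro x hx
    have hpos : 0 ≤ algebraMap ℝ (H →L[ℂ] H) c - T := sub_nonneg.mpr h2
    have hmem : c - x ∈ spectrum ℝ (algebraMap ℝ (H →L[ℂ] H) c - T) := by
      rw [← spectrum.singleton_sub_eq]
      exact Set.sub_mem_sub (Set.mem_singleton c) hx
    have := spectrum_nonneg_of_nonneg hpos hmem
    linarith
  have hlb : ∀ x ∈ spectrum ℝ T, -c ≤ x := by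
    intro x hx
    have hneg : -T ≤ algebraMap ℝ (H →L[ℂ] H) c := by
      rw [hT, neg_sub]
      exact h1
    have hpos : 0 ≤ T + algebraMap ℝ (H →L[ℂ] H) c := by
      have h3 := sub_nonneg.mpr hneg
      rwa [sub_neg_eq_add, add_comm] at h3
    have hmem : x + c ∈ spectrum ℝ (T + algebraMap ℝ (H →L[ℂ] H) c) := by
      rw [← spectrum.add_singleton_eq]
      exact Set.add_mem_add hx (Set.mem_singleton c)
    have := spectrum_nonneg_of_nonneg hpos hmem
    linarith
  have hTnorm : ‖cfc (id : ℝ → ℝ) T‖ ≤ c :=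
    norm_cfc_le hc0 fun x hx => by
      simpa [Real.norm_eq_abs] using abs_le.mpr ⟨hlb x hx, hub x hx⟩
  rwa [cfc_id ℝ T hTsa] at hTnorm
end
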